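/- arXiv:1410.4785 — 3 statements merged into one kernel-verified Lean document; each statement's English description precedes it below -/
import Mathlib

section
/- Let m ≥ 3 and ε ∈ 𝔽₂, and let B^ε be the collection of all 4-element subsets S of V^ε = {v ∈ 𝔽₂^{2m} : θ₀(v) = ε} such that Σ_{v∈S} v = 0 in 𝔽₂^{2m}. Then: (i) any two distinct members of B^ε intersect in at most 2 elements; and (ii) for every pair of distinct a, b ∈ V^ε, the number of members of B^ε containing both a and b is exactly 2^{m−2}·(2^{m−1} + (−1)^ε) − 1, where (−1)^ε means +1 if ε = 0 and −1 if ε = 1. (Hence (V^ε, B^ε) is a supersimple 2-(2^{m−1}(2^m+(−1)^ε), 4, 2^{m−2}(2^{m−1}+(−1)^ε)−1) design.) -/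
open Matrix

/-- Row vectors in `𝔽₂^{2m}`, with coordinates indexed by `Fin m ⊕ Fin m`
(the first block and the second block of `m` coordinates). -/
abbrev Vm (m : ℕ) := (Fin m ⊕ Fin m) → ZMod 2

/-- The block matrix `e = (0 Iₘ; 0 0)`. -/
def eMat (m : ℕ) : Matrix (Fin m ⊕ Fin m) (Fin m ⊕ Fin m) (ZMod 2) :=
  Matrix.fromBlocks 0 1 0 0

/-- The block matrix `f = e + eᵀ = (0 Iₘ; Iₘ 0)`. -/
def fMat (m : ℕ) : Matrix (Fin m ⊕ Fin m) (Fin m ⊕ Fin m) (ZMod 2) :=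
  eMat m + (eMat m)ᵀ

/-- The alternating bilinear form `φ(u,v) = u f vᵀ`. -/
def phi (m : ℕ) (u v : Vm m) : ZMod 2 := u ⬝ᵥ (fMat m).mulVec v

/-- The quadratic form `θ₀(u) = u e uᵀ`. -/
def theta0 (m : ℕ) (u : Vm m) : ZMod 2 := u ⬝ᵥ (eMat m).mulVec u

/-- The quadratic form `θ_a(u) = θ₀(u) + φ(u,a)`. -/
def theta (m : ℕ) (a u : Vm m) : ZMod 2 := theta0 m u + phi m u a

/-- The transvection `t_c : u ↦ u + φ(u,c)·c`. -/
def tvec (m : ℕ) (c u : Vm m) : Vm m := u + phi m u c • c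

/-- The line set `B^ε`: 4-element subsets of `V^ε` summing to zero. -/
def Bset (m : ℕ) (ε : ZMod 2) : Set (Finset (Vm m)) :=
  {S | S.card = 4 ∧ (∀ v ∈ S, theta0 m v = ε) ∧ ∑ v ∈ S, v = 0}

/-!
(i) Over `𝔽₂` a zero-sum 4-set is determined by any three of its points (the fourth is their sum),
so two blocks sharing three points coincide.

(ii) With `s = a + b`, the blocks through `a, b` are the sets `{a, b, c, c + s}` with `c` and
`c + s` in `V^ε`, and each block arises from exactly two such `c`. Among the `c ∈ V^ε`, those with
`c + s ∉ V^ε` are half of the `c` with `θ₀(c + s) ≠ θ₀(c)`; by polarization these are the solutions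
of the affine equation `φ(c, s) = θ₀(s) + 1`, a quarter of `V`. Together with
`|V^ε| = 2^{2m-1} + (-1)^ε 2^{m-1}` this gives the count.
-/

open Finset

theorem two_mul_card_filter_eq_of_involutive {α : Type*} {s : Finset α} {t : α → α}
    (ht : Function.Involutive t) (hts : ∀ x ∈ s, t x ∈ s) {L : α → ZMod 2}
    (hL : ∀ x ∈ s, L (t x) = L x + 1) (δ : ZMod 2) :
    2 * #{x ∈ s | L x = δ} = #s := by
  have hflip : ∀ z w : ZMod 2, z + 1 = w ↔ ¬z = w := by decide
  have hswap : #{x ∈ s | L x = δ} = #{x ∈ s | ¬L x = δ} := by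
    refine card_nbij' t t ?_ ?_ (fun x _ => ht x) (fun x _ => ht x) <;>
    · intro x hx
      simp only [coe_filter, Set.mem_ofPred_eq] at hx ⊢
      refine ⟨hts x hx.1, ?_⟩
      rw [hL x hx.1, hflip]
      simpa using hx.2
  rw [two_mul]
  nth_rewrite 2 [hswap]
  exact card_filter_add_card_filter_not _

theorem two_mul_card_filter_dotProduct_eq {ι : Type*} [Fintype ι] [DecidableEq ι]
    {w : ι → ZMod 2} (hw : w ≠ 0) (δ : ZMod 2) :
    2 * #{x : ι → ZMod 2 | x ⬝ᵥ w = δ} = 2 ^ Fintype.card ι := by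
  obtain ⟨j, hj⟩ := Function.ne_iff.mp hw
  have hj1 : w j = 1 := (by decide : ∀ z : ZMod 2, z ≠ 0 → z = 1) _ hj
  have := two_mul_card_filter_eq_of_involutive (s := univ) (t := (· + Pi.single j 1))
    (fun x => by simp [add_assoc, ZModModule.add_self]) (fun _ _ => mem_univ _)
    (L := (· ⬝ᵥ w)) (fun x _ => by simp [add_dotProduct, single_dotProduct, hj1]) δ
  rwa [card_univ, Fintype.card_fun, ZMod.card] at this

theorem two_mul_card_filter_ne_translate {G : Type*} [AddCommGroup G] [Module (ZMod 2) G]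
    [Fintype G] [DecidableEq G] (Q : G → ZMod 2) (s : G) (ε : ZMod 2) :
    2 * #{c | Q c = ε ∧ Q (c + s) ≠ ε} = #{c | Q (c + s) ≠ Q c} := by
  have hflip : ∀ z w : ZMod 2, z ≠ w → z = w + 1 := by decide
  have := two_mul_card_filter_eq_of_involutive (s := {c | Q (c + s) ≠ Q c}) (t := (· + s))
    (fun c => by simp [add_assoc, ZModModule.add_self])
    (fun c hc => by simpa [add_assoc, ZModModule.add_self, eq_comm] using hc)
    (fun c hc => hflip _ _ (mem_filter.mp hc).2) ε
  have hswap : univ.filter (fun c => Q (c + s) ≠ Q c ∧ Q c = ε) =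
      univ.filter (fun c => Q c = ε ∧ Q (c + s) ≠ ε) := by
    ext c
    simp only [mem_filter, mem_univ, true_and]
    constructor
    · rintro ⟨hne, rfl⟩; exact ⟨rfl, hne⟩
    · rintro ⟨rfl, hne⟩; exact ⟨hne, rfl⟩
  rwa [filter_filter, hswap] at this

section QuadraticForm

variable {ι : Type*} [Fintype ι]

theorem add_dotProduct_mulVec_add {R : Type*} [CommRing R] (M : Matrix ι ι R) (u v : ι → R) :
    (u + v) ⬝ᵥ M *ᵥ (u + v) = u ⬝ᵥ M *ᵥ u + v ⬝ᵥ M *ᵥ v + u ⬝ᵥ (M + Mᵀ) *ᵥ v := by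
  simp only [add_dotProduct, dotProduct_add, mulVec_add, add_mulVec, mulVec_transpose,
    dotProduct_comm u (v ᵥ* M), dotProduct_mulVec v M u]
  abel

theorem four_mul_card_filter_quadratic_ne_translate [DecidableEq ι] (M : Matrix ι ι (ZMod 2))
    {s : ι → ZMod 2} (hs : (M + Mᵀ) *ᵥ s ≠ 0) (ε : ZMod 2) :
    4 * #{c | c ⬝ᵥ M *ᵥ c = ε ∧ (c + s) ⬝ᵥ M *ᵥ (c + s) ≠ ε} = 2 ^ Fintype.card ι := by
  have hpolar : ∀ x y z : ZMod 2, x + y + z ≠ x ↔ z = y + 1 := by decide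
  have hD : univ.filter (fun c => (c + s) ⬝ᵥ M *ᵥ (c + s) ≠ c ⬝ᵥ M *ᵥ c) =
      univ.filter (fun c => c ⬝ᵥ (M + Mᵀ) *ᵥ s = s ⬝ᵥ M *ᵥ s + 1) :=
    filter_congr fun c _ => by rw [add_dotProduct_mulVec_add, hpolar]
  rw [← two_mul_card_filter_dotProduct_eq hs (s ⬝ᵥ M *ᵥ s + 1), ← hD,
    ← two_mul_card_filter_ne_translate (fun c => c ⬝ᵥ M *ᵥ c) s ε]
  ring

end QuadraticForm

theorem eq_insert_neg_sum_of_sum_eq_zero {G : Type*} [AddCommGroup G] [DecidableEq G]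
    {S R : Finset G} (hRS : R ⊆ S) (hcard : #S = #R + 1) (hsum : ∑ v ∈ S, v = 0) :
    S = insert (-∑ v ∈ R, v) R := by
  obtain ⟨x, hx⟩ := card_eq_one.mp (by rw [card_sdiff_of_subset hRS]; omega : #(S \ R) = 1)
  have hxR : x ∉ R := (mem_sdiff.mp (hx ▸ mem_singleton_self x)).2
  have hSx : S = insert x R := by rw [← sdiff_union_of_subset hRS, hx, insert_eq]
  rw [hSx, sum_insert hxR] at hsum
  rw [hSx, eq_neg_of_add_eq_zero_left hsum]

theorem ZModModule.eq_of_add_eq_zero {G : Type*} [AddCommGroup G] [Module (ZMod 2) G] {x y : G}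
    (h : x + y = 0) : x = y :=
  (add_eq_zero_iff_eq_neg.mp h).trans (ZModModule.neg_eq_self y)

theorem add_add_notMem_triple {G : Type*} [AddCommGroup G] [Module (ZMod 2) G] [DecidableEq G]
    {a b c : G} (hab : a ≠ b) (hac : a ≠ c) (hbc : b ≠ c) :
    a + b + c ∉ ({a, b, c} : Finset G) := by
  simp only [mem_insert, mem_singleton, not_or]
  refine ⟨fun h => hbc ?_, fun h => hac ?_, fun h => hab ?_⟩ <;>
    apply ZModModule.eq_of_add_eq_zero
  · rwa [add_assoc, add_eq_left] at h
  · rwa [add_right_comm, add_eq_right] at h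
  · rwa [add_eq_right] at h

theorem sum_triple {M : Type*} [AddCommMonoid M] [DecidableEq M] {a b c : M} (hab : a ≠ b)
    (hac : a ≠ c) (hbc : b ≠ c) : ∑ v ∈ ({a, b, c} : Finset M), v = a + b + c := by
  rw [sum_insert (by simp [hab, hac]), sum_pair hbc, add_assoc]

theorem theta0_eq_dotProduct (m : ℕ) (u : Vm m) :
    theta0 m u = (u ∘ Sum.inl) ⬝ᵥ (u ∘ Sum.inr) := by
  rw [theta0, eMat, fromBlocks_mulVec]
  nth_rewrite 1 [← Sum.elim_comp_inl_inr u]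
  rw [sumElim_dotProduct_sumElim]
  simp

theorem fMat_mul_self (m : ℕ) : fMat m * fMat m = 1 := by
  simp [fMat, eMat, fromBlocks_transpose, fromBlocks_add, fromBlocks_multiply, ← fromBlocks_one]

theorem mulVec_fMat_ne_zero {m : ℕ} {s : Vm m} (hs : s ≠ 0) : fMat m *ᵥ s ≠ 0 := fun h =>
  hs (by simpa [mulVec_mulVec, fMat_mul_self] using congrArg (fMat m *ᵥ ·) h)

theorem two_mul_card_theta0_eq (m : ℕ) (ε : ZMod 2) :
    2 * #{v : Vm m | theta0 m v = ε} = 2 * (if ε = 0 then 2 ^ m else 0) + (2 ^ m - 1) * 2 ^ m := by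
  have hsplit : #{v : Vm m | theta0 m v = ε} = ∑ x : Fin m → ZMod 2, #{y | x ⬝ᵥ y = ε} := by
    simp only [card_filter, theta0_eq_dotProduct]
    rw [← Fintype.sum_prod_type']
    exact Fintype.sum_equiv (Equiv.sumArrowEquivProdArrow _ _ _) _ _ fun _ => rfl
  have hzero : #{y : Fin m → ZMod 2 | 0 ⬝ᵥ y = ε} = if ε = 0 then 2 ^ m else 0 := by
    split_ifs with hε <;> simp [zero_dotProduct, hε, eq_comm]
  have hne : ∀ x ∈ ({0}ᶜ : Finset (Fin m → ZMod 2)), 2 * #{y | x ⬝ᵥ y = ε} = 2 ^ m := by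
    intro x hx
    simp_rw [dotProduct_comm x]
    simpa using two_mul_card_filter_dotProduct_eq (mem_compl.mp hx ∘ mem_singleton.mpr) ε
  rw [hsplit, mul_sum, Fintype.sum_eq_add_sum_compl 0, hzero, sum_congr rfl hne, sum_const,
    card_compl, card_singleton, Fintype.card_fun, ZMod.card, Fintype.card_fin, smul_eq_mul]

namespace Bset

variable {m : ℕ} {ε : ZMod 2}

theorem card_inter_le_two {S T : Finset (Vm m)} (hS : S ∈ Bset m ε) (hT : T ∈ Bset m ε)
    (hST : S ≠ T) : #(S ∩ T) ≤ 2 := by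
  by_contra! h
  obtain ⟨R, hR, hR3⟩ := exists_subset_card_eq h
  exact hST <| (eq_insert_neg_sum_of_sum_eq_zero (hR.trans inter_subset_left) (by rw [hS.1, hR3])
    hS.2.2).trans (eq_insert_neg_sum_of_sum_eq_zero (hR.trans inter_subset_right)
      (by rw [hT.1, hR3]) hT.2.2).symm

theorem eq_insert_add_add {S : Finset (Vm m)} (hS : S ∈ Bset m ε) {a b c : Vm m}
    (ha : a ∈ S) (hb : b ∈ S) (hc : c ∈ S) (hab : a ≠ b) (hac : a ≠ c) (hbc : b ≠ c) :
    S = insert (a + b + c) {a, b, c} := by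
  have hR : {a, b, c} ⊆ S := by simp [insert_subset_iff, ha, hb, hc]
  have hcard : #S = #{a, b, c} + 1 := by
    rw [hS.1, card_eq_three.mpr ⟨a, b, c, hab, hac, hbc, rfl⟩]
  rw [eq_insert_neg_sum_of_sum_eq_zero hR hcard hS.2.2, sum_triple hab hac hbc,
    ZModModule.neg_eq_self]

theorem insert_add_add_mem {a b c : Vm m} (hab : a ≠ b) (hac : a ≠ c) (hbc : b ≠ c)
    (ha : theta0 m a = ε) (hb : theta0 m b = ε) (hc : theta0 m c = ε)
    (hd : theta0 m (a + b + c) = ε) : insert (a + b + c) {a, b, c} ∈ Bset m ε := by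
  have hd_notMem := add_add_notMem_triple hab hac hbc
  refine ⟨?_, ?_, ?_⟩
  · rw [card_insert_of_notMem hd_notMem, card_eq_three.mpr ⟨a, b, c, hab, hac, hbc, rfl⟩]
  · simp [ha, hb, hc, hd]
  · rw [sum_insert hd_notMem, sum_triple hab hac hbc, ZModModule.add_self]

theorem two_mul_ncard_blocks_through_add_two {a b : Vm m} (hab : a ≠ b) (ha : theta0 m a = ε)
    (hb : theta0 m b = ε) :
    2 * {S : Finset (Vm m) | S ∈ Bset m ε ∧ a ∈ S ∧ b ∈ S}.ncard + 2 =
      #{c | theta0 m c = ε ∧ theta0 m (c + (a + b)) = ε} := by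
  classical
  set P : Finset (Vm m) := {c | theta0 m c = ε ∧ theta0 m (c + (a + b)) = ε}
  set blocks : Finset (Finset (Vm m)) := {S | S ∈ Bset m ε ∧ a ∈ S ∧ b ∈ S}
  have hblocks : {S : Finset (Vm m) | S ∈ Bset m ε ∧ a ∈ S ∧ b ∈ S} = ↑blocks := by
    ext S; simp [blocks]
  have habP : {a, b} ⊆ P := by
    have has : a + (a + b) = b := by rw [← add_assoc, ZModModule.add_self, zero_add]
    have hbs : b + (a + b) = a := by rw [add_comm a, ← add_assoc, ZModModule.add_self, zero_add]
    simp [P, insert_subset_iff, ha, hb, has, hbs]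
  have hunion : P \ {a, b} = blocks.biUnion (· \ {a, b}) := by
    ext c
    simp only [P, blocks, mem_sdiff, mem_biUnion, mem_filter, mem_univ, true_and, mem_insert,
      mem_singleton, not_or]
    have hd : c + (a + b) = a + b + c := add_comm _ _
    constructor
    · rintro ⟨⟨hc, hcs⟩, hca, hcb⟩
      refine ⟨insert (a + b + c) {a, b, c},
        ⟨insert_add_add_mem hab (Ne.symm hca) (Ne.symm hcb) ha hb hc (hd ▸ hcs), by simp, by simp⟩,
        by simp, hca, hcb⟩
    · rintro ⟨S, ⟨hS, haS, hbS⟩, hcS, hca, hcb⟩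
      have hSeq := eq_insert_add_add hS haS hbS hcS hab (Ne.symm hca) (Ne.symm hcb)
      exact ⟨⟨hS.2.1 c hcS, hd ▸ hS.2.1 _ (hSeq ▸ mem_insert_self _ _)⟩, hca, hcb⟩
  have hdisj : (blocks : Set (Finset (Vm m))).PairwiseDisjoint (· \ {a, b}) := by
    intro S hS T hT hST
    simp only [blocks, coe_filter, mem_univ, true_and, Set.mem_ofPred_eq] at hS hT
    refine disjoint_left.mpr fun c hcS hcT => hST ?_
    simp only [mem_sdiff, mem_insert, mem_singleton, not_or] at hcS hcT
    rw [eq_insert_add_add hS.1 hS.2.1 hS.2.2 hcS.1 hab (Ne.symm hcS.2.1) (Ne.symm hcS.2.2),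
      eq_insert_add_add hT.1 hT.2.1 hT.2.2 hcT.1 hab (Ne.symm hcT.2.1) (Ne.symm hcT.2.2)]
  have hpair : ∀ S ∈ blocks, #(S \ {a, b}) = 2 := by
    intro S hS
    simp only [blocks, mem_filter, mem_univ, true_and] at hS
    rw [card_sdiff_of_subset (by simp [insert_subset_iff, hS.2]), hS.1.1, card_pair hab]
  rw [hblocks, Set.ncard_coe_finset, ← card_sdiff_add_card_eq_card habP, hunion,
    card_biUnion hdisj, sum_const_nat hpair, card_pair hab, mul_comm]

end Bset

theorem stmt_0 (m : ℕ) (hm : 3 ≤ m) (ε : ZMod 2) :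
    (∀ S T : Finset (Vm m), S ∈ Bset m ε → T ∈ Bset m ε → S ≠ T →
        (S ∩ T).card ≤ 2) ∧
    (∀ a b : Vm m, a ≠ b → theta0 m a = ε → theta0 m b = ε →
        {S : Finset (Vm m) | S ∈ Bset m ε ∧ a ∈ S ∧ b ∈ S}.ncard =
          (if ε = 0 then 2 ^ (m - 2) * (2 ^ (m - 1) + 1) - 1
           else 2 ^ (m - 2) * (2 ^ (m - 1) - 1) - 1)) := by
  refine ⟨fun S T hS hT hST => Bset.card_inter_le_two hS hT hST, fun a b hab ha hb => ?_⟩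
  have hs : fMat m *ᵥ (a + b) ≠ 0 :=
    mulVec_fMat_ne_zero fun h => hab (ZModModule.eq_of_add_eq_zero h)
  have hleave := four_mul_card_filter_quadratic_ne_translate (eMat m) hs ε
  change 4 * #{c | theta0 m c = ε ∧ ¬theta0 m (c + (a + b)) = ε} = _ at hleave
  have hsplit := card_filter_add_card_filter_not (s := {v : Vm m | theta0 m v = ε})
    (fun c => theta0 m (c + (a + b)) = ε)
  rw [filter_filter, filter_filter] at hsplit
  have hcardV := two_mul_card_theta0_eq m ε
  have hblocks := Bset.two_mul_ncard_blocks_through_add_two hab ha hb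
  obtain ⟨q, hq⟩ : ∃ q, q = 2 ^ (m - 2) := ⟨_, rfl⟩
  have h4 : 2 ^ m = 4 * q := by rw [hq, ← pow_sub_mul_pow 2 (by omega : 2 ≤ m)]; ring
  have h2 : 2 ^ (m - 1) = 2 * q := by rw [hq, ← pow_succ']; congr 1; omega
  have h16 : 4 * q * (4 * q) = 16 * (q * q) := by ring
  have hqq : q ≤ q * q := Nat.le_mul_self q
  rw [Fintype.card_sum, Fintype.card_fin, pow_add, h4, h16] at hleave
  rw [h4, Nat.sub_mul, h16] at hcardV
  have hplus : q * (2 * q + 1) = 2 * (q * q) + q := by ring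
  have hminus : q * (2 * q - 1) = 2 * (q * q) - q := by
    rw [Nat.mul_sub, mul_one, ← mul_assoc, mul_comm q 2, mul_assoc]
  rw [← hq, h2, hplus, hminus]
  generalize q * q = p at *
  split_ifs at hcardV ⊢ <;> omega
end

section
/- Let m ≥ 3 and let B^a be the collection of all 4-element subsets T of V = 𝔽₂^{2m} such that Σ_{v∈T} v = 0 in 𝔽₂^{2m} and Σ_{v∈T} θ₀(v) = 0 in 𝔽₂. Then: (i) any two distinct members of B^a intersect in at most 2 elements; and (ii) for every pair of distinct x, y ∈ V, the number of members of B^a containing both x and y is exactly 2^{2m−2} − 1. (Hence (V, B^a) is a supersimple 2-(2^{2m}, 4, 2^{2m−2}−1) design.) -/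
open Matrix

/-- The line set `B^a`: 4-element subsets of `V` summing to zero whose `θ₀`-values sum to zero. -/
def BsetA (m : ℕ) : Set (Finset (Vm m)) :=
  {T | T.card = 4 ∧ ∑ v ∈ T, v = 0 ∧ ∑ v ∈ T, theta0 m v = 0}

/-! A 4-set with zero sum is determined by any three of its elements, the fourth being minus
their sum; this gives (i). A block through `x ≠ y` is therefore `{x, y, z, x + y + z}`, and since
`θ₀` is a quadratic form with polar form `φ`, its `θ₀`-values sum to `φ(x, y) + φ(x + y, z)`.
So the blocks through `x, y` correspond two-to-one (`z` and `x + y + z` give the same block) to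
the points `z ∉ {x, y}` of the affine hyperplane `φ(x + y, z) = φ(x, y)`, which has `2^{2m-1}`
points because `φ` is nondegenerate. -/

open Finset

section SumZeroQuadruples

variable {G : Type*} [AddCommGroup G]

theorem ZModModule.add_eq_zero_iff [Module (ZMod 2) G] {x y : G} : x + y = 0 ↔ x = y := by
  rw [add_eq_zero_iff_eq_neg, ZModModule.neg_eq_self]

variable [DecidableEq G]

theorem eq_insert_neg_sum_of_card_eq_four {X I : Finset G} (hX : #X = 4)
    (hX0 : ∑ v ∈ X, v = 0) (hIX : I ⊆ X) (hI : #I = 3) : X = insert (-∑ v ∈ I, v) I := by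
  obtain ⟨a, ha⟩ : ∃ a, X \ I = {a} := card_eq_one.mp (by rw [card_sdiff_of_subset hIX, hX, hI])
  have haI : a ∉ I := fun h => (mem_sdiff.mp (ha ▸ mem_singleton_self a)).2 h
  have hXa : X = insert a I := by rw [insert_eq, ← ha, sdiff_union_of_subset hIX]
  rw [hXa, sum_insert haI, add_eq_zero_iff_eq_neg] at hX0
  rw [hXa, hX0]

theorem card_inter_le_two_of_card_eq_four {S T : Finset G} (hS : #S = 4) (hT : #T = 4)
    (hS0 : ∑ v ∈ S, v = 0) (hT0 : ∑ v ∈ T, v = 0) (hST : S ≠ T) : #(S ∩ T) ≤ 2 := by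
  by_contra! h
  obtain ⟨I, hI, hI3⟩ := exists_subset_card_eq (show 3 ≤ #(S ∩ T) by omega)
  exact hST <| (eq_insert_neg_sum_of_card_eq_four hS hS0 (hI.trans inter_subset_left) hI3).trans
    (eq_insert_neg_sum_of_card_eq_four hT hT0 (hI.trans inter_subset_right) hI3).symm

variable [Module (ZMod 2) G]

def quadruple (x y z : G) : Finset G := insert (x + y + z) {x, y, z}

theorem sum_quadruple {M : Type*} [AddCommMonoid M] {x y z : G} (hxy : x ≠ y) (hxz : x ≠ z)
    (hyz : y ≠ z) (f : G → M) :
    ∑ v ∈ quadruple x y z, f v = f (x + y + z) + (f x + (f y + f z)) := by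
  have hw : x + y + z ∉ ({x, y, z} : Finset G) := by
    simp only [mem_insert, mem_singleton, not_or]
    refine ⟨?_, ?_, ?_⟩
    · rwa [add_assoc, add_eq_left, ZModModule.add_eq_zero_iff]
    · rwa [add_right_comm, add_eq_right, ZModModule.add_eq_zero_iff]
    · rwa [add_eq_right, ZModModule.add_eq_zero_iff]
  rw [quadruple, sum_insert hw, sum_insert (by simp [hxy, hxz]), sum_pair hyz]

theorem card_quadruple {x y z : G} (hxy : x ≠ y) (hxz : x ≠ z) (hyz : y ≠ z) :
    #(quadruple x y z) = 4 := by
  rw [card_eq_sum_ones, sum_quadruple hxy hxz hyz]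
  rfl

theorem sum_quadruple_self {x y z : G} (hxy : x ≠ y) (hxz : x ≠ z) (hyz : y ≠ z) :
    ∑ v ∈ quadruple x y z, v = 0 := by
  rw [sum_quadruple hxy hxz hyz, ← add_assoc x y z]
  exact ZModModule.add_self _

theorem eq_quadruple_of_card_eq_four {T : Finset G} (hT : #T = 4) (hT0 : ∑ v ∈ T, v = 0)
    {x y z : G} (hx : x ∈ T) (hy : y ∈ T) (hz : z ∈ T) (hxy : x ≠ y) (hxz : x ≠ z)
    (hyz : y ≠ z) : T = quadruple x y z := by
  have hsub : {x, y, z} ⊆ T := by simp [insert_subset_iff, hx, hy, hz]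
  have hcard : #{x, y, z} = 3 := by simp [card_insert_of_notMem, hxy, hxz, hyz]
  rw [eq_insert_neg_sum_of_card_eq_four hT hT0 hsub hcard, ZModModule.neg_eq_self,
    sum_insert (by simp [hxy, hxz]), sum_pair hyz, ← add_assoc, quadruple]

end SumZeroQuadruples

variable {m : ℕ}

theorem fMat_mulVec (v : Vm m) : fMat m *ᵥ v = v ∘ Sum.swap := by
  ext (i | i) <;> simp [fMat, eMat, mulVec, dotProduct, Fintype.sum_sum_type, fromBlocks, one_apply]

theorem phi_eq_sum (u v : Vm m) :
    phi m u v = ∑ i, (u (.inl i) * v (.inr i) + u (.inr i) * v (.inl i)) := by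
  simp [phi, fMat_mulVec, dotProduct, Fintype.sum_sum_type, sum_add_distrib]

theorem theta0_eq_sum (u : Vm m) : theta0 m u = ∑ i, u (.inl i) * u (.inr i) := by
  simp [theta0, eMat, mulVec, dotProduct, Fintype.sum_sum_type, fromBlocks, one_apply]

theorem phi_add_right (u v w : Vm m) : phi m u (v + w) = phi m u v + phi m u w := by
  simp only [phi, mulVec_add, dotProduct_add]

theorem theta0_add (u v : Vm m) : theta0 m (u + v) = theta0 m u + theta0 m v + phi m u v := by
  simp only [theta0_eq_sum, phi_eq_sum, Pi.add_apply, ← sum_add_distrib]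
  exact sum_congr rfl fun i _ => by ring

theorem phi_add_left (u v w : Vm m) : phi m (u + v) w = phi m u w + phi m v w := by
  simp only [phi, add_dotProduct]

theorem phi_comm (u v : Vm m) : phi m u v = phi m v u := by
  simp only [phi_eq_sum]
  exact sum_congr rfl fun i _ => by ring

theorem phi_self (u : Vm m) : phi m u u = 0 := by
  simp only [phi_eq_sum, mul_comm (u (.inr _)), CharTwo.add_self_eq_zero, sum_const_zero]

theorem exists_phi_eq_one {s : Vm m} (hs : s ≠ 0) : ∃ z, phi m s z = 1 := by
  obtain ⟨k, hk⟩ := Function.ne_iff.mp hs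
  refine ⟨Pi.single k 1 ∘ Sum.swap, ?_⟩
  rw [phi, fMat_mulVec, Function.comp_assoc, Sum.swap_swap_eq, Function.comp_id,
    dotProduct_single_one]
  exact Fin.eq_one_of_ne_zero _ hk

theorem card_filter_phi_eq {s : Vm m} (hs : s ≠ 0) (c : ZMod 2) :
    #{z | phi m s z = c} = 2 ^ (2 * m - 1) := by
  let φs : Vm m →+ ZMod 2 := AddMonoidHom.mk' (phi m s) (phi_add_right s)
  have hsurj (c : ZMod 2) : c ∈ Set.range φs := by
    obtain ⟨z, hz⟩ := exists_phi_eq_one hs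
    fin_cases c
    exacts [⟨0, map_zero φs⟩, ⟨z, hz⟩]
  have hcard : 2 ^ (2 * m) = 2 * #{z | φs z = c} := calc
    2 ^ (2 * m) = #(univ : Finset (Vm m)) := by simp [two_mul, pow_add]
    _ = ∑ c' : ZMod 2, #{z | φs z = c'} :=
      card_eq_sum_card_fiberwise fun _ _ => mem_coe.2 (mem_univ _)
    _ = 2 * #{z | φs z = c} := by
      rw [sum_const_nat fun c' _ => AddMonoidHom.card_fiber_eq_of_mem_range φs (hsurj c') (hsurj c)]
      rfl
  have hm : m ≠ 0 := by rintro rfl; exact hs (Subsingleton.elim _ _)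
  rw [show 2 * m = 2 * m - 1 + 1 by omega, pow_succ] at hcard
  change _ = 2 * #{z | phi m s z = c} at hcard
  omega

theorem sum_theta0_quadruple {x y z : Vm m} (hxy : x ≠ y) (hxz : x ≠ z) (hyz : y ≠ z) :
    ∑ v ∈ quadruple x y z, theta0 m v = phi m x y + phi m (x + y) z := by
  rw [sum_quadruple hxy hxz hyz, theta0_add, theta0_add]
  linear_combination CharTwo.add_self_eq_zero (theta0 m x) +
    CharTwo.add_self_eq_zero (theta0 m y) + CharTwo.add_self_eq_zero (theta0 m z)

theorem quadruple_mem_BsetA_iff {x y z : Vm m} (hxy : x ≠ y) (hxz : x ≠ z) (hyz : y ≠ z) :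
    quadruple x y z ∈ BsetA m ↔ phi m (x + y) z = phi m x y := by
  simp only [BsetA, Set.mem_ofPred_eq, card_quadruple hxy hxz hyz, sum_quadruple_self hxy hxz hyz,
    sum_theta0_quadruple hxy hxz hyz, true_and]
  exact CharTwo.add_eq_zero.trans eq_comm

def completions (x y : Vm m) : Finset (Vm m) :=
  ({z | phi m (x + y) z = phi m x y} : Finset (Vm m)) \ {x, y}

theorem mem_completions {x y z : Vm m} :
    z ∈ completions x y ↔ x ≠ z ∧ y ≠ z ∧ phi m (x + y) z = phi m x y := by
  simp only [completions, mem_sdiff, mem_filter, mem_univ, true_and, mem_insert, mem_singleton,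
    not_or, ne_comm (b := z)]
  tauto

theorem card_completions {x y : Vm m} (hxy : x ≠ y) :
    #(completions x y) = 2 ^ (2 * m - 1) - 2 := by
  have hsub : {x, y} ⊆ ({z | phi m (x + y) z = phi m x y} : Finset (Vm m)) := by
    simp [insert_subset_iff, phi_add_left, phi_self, phi_comm y x]
  rw [completions, card_sdiff_of_subset hsub, card_pair hxy,
    card_filter_phi_eq (mt ZModModule.add_eq_zero_iff.mp hxy)]

theorem mem_completions_and_quadruple_eq_iff {T : Finset (Vm m)} (hT : T ∈ BsetA m)
    {x y z : Vm m} (hx : x ∈ T) (hy : y ∈ T) (hxy : x ≠ y) :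
    z ∈ completions x y ∧ quadruple x y z = T ↔ z ∈ T \ {x, y} := by
  constructor
  · rintro ⟨hz, rfl⟩
    obtain ⟨hxz, hyz, -⟩ := mem_completions.mp hz
    simp [quadruple, hxz.symm, hyz.symm]
  · intro hz
    obtain ⟨hzT, hzx, hzy⟩ : z ∈ T ∧ z ≠ x ∧ z ≠ y := by simpa using hz
    have hTz := eq_quadruple_of_card_eq_four hT.1 hT.2.1 hx hy hzT hxy hzx.symm hzy.symm
    refine ⟨mem_completions.mpr ⟨hzx.symm, hzy.symm, ?_⟩, hTz.symm⟩
    exact (quadruple_mem_BsetA_iff hxy hzx.symm hzy.symm).mp (hTz ▸ hT)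

theorem ncard_BsetA_containing_pair {x y : Vm m} (hxy : x ≠ y) :
    {T : Finset (Vm m) | T ∈ BsetA m ∧ x ∈ T ∧ y ∈ T}.ncard = 2 ^ (2 * m - 2) - 1 := by
  classical
  let blocks : Finset (Finset (Vm m)) := {T | T ∈ BsetA m ∧ x ∈ T ∧ y ∈ T}
  have hmaps : ∀ z ∈ completions x y, quadruple x y z ∈ blocks := by
    intro z hz
    obtain ⟨hxz, hyz, hφ⟩ := mem_completions.mp hz
    exact mem_filter.mpr ⟨mem_univ _, (quadruple_mem_BsetA_iff hxy hxz hyz).mpr hφ,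
      by simp [quadruple], by simp [quadruple]⟩
  have hfiber : ∀ T ∈ blocks, #{z ∈ completions x y | quadruple x y z = T} = 2 := by
    intro T hT
    obtain ⟨hT, hx, hy⟩ := (mem_filter.mp hT).2
    have hfib : {z ∈ completions x y | quadruple x y z = T} = T \ {x, y} := by
      ext z
      rw [mem_filter, mem_completions_and_quadruple_eq_iff hT hx hy hxy]
    rw [hfib, card_sdiff_of_subset (insert_subset hx (singleton_subset_iff.mpr hy)), hT.1,
      card_pair hxy]
  have hcount : #(completions x y) = #blocks * 2 :=
    (card_eq_sum_card_fiberwise hmaps).trans (sum_const_nat hfiber)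
  have hm : m ≠ 0 := by rintro rfl; exact hxy (Subsingleton.elim _ _)
  rw [card_completions hxy, show 2 * m - 1 = 2 * m - 2 + 1 by omega, pow_succ] at hcount
  rw [show {T | T ∈ BsetA m ∧ x ∈ T ∧ y ∈ T} = (blocks : Set (Finset (Vm m))) by ext; simp [blocks],
    Set.ncard_coe_finset]
  omega

theorem stmt_1_general (m : ℕ) :
    (∀ S T : Finset (Vm m), S ∈ BsetA m → T ∈ BsetA m → S ≠ T →
        (S ∩ T).card ≤ 2) ∧
    (∀ x y : Vm m, x ≠ y →
        {T : Finset (Vm m) | T ∈ BsetA m ∧ x ∈ T ∧ y ∈ T}.ncard =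
          2 ^ (2 * m - 2) - 1) :=
  ⟨fun _ _ hS hT hST => card_inter_le_two_of_card_eq_four hS.1 hT.1 hS.2.1 hT.2.1 hST,
    fun _ _ => ncard_BsetA_containing_pair⟩

theorem stmt_1 (m : ℕ) (hm : 3 ≤ m) :
    (∀ S T : Finset (Vm m), S ∈ BsetA m → T ∈ BsetA m → S ≠ T →
        (S ∩ T).card ≤ 2) ∧
    (∀ x y : Vm m, x ≠ y →
        {T : Finset (Vm m) | T ∈ BsetA m ∧ x ∈ T ∧ y ∈ T}.ncard =
          2 ^ (2 * m - 2) - 1) :=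
  stmt_1_general m
end

section
/- Let m ≥ 3 and ε ∈ 𝔽₂. Then: every codeword of C^ε has even Hamming weight; every nonzero codeword of C^ε has Hamming weight at least 4 (so C^ε has minimum distance 4); and a characteristic vector χ_S of a 4-element subset S ⊆ V^ε lies in C^ε if and only if Σ_{v∈S} v = 0. Likewise, every codeword of C^a has even weight, every nonzero codeword of C^a has weight at least 4, and for a 4-element subset T ⊆ V the vector χ_T lies in C^a if and only if Σ_{v∈T} v = 0 and Σ_{v∈T} θ₀(v) = 0. -/
open Matrix

/-- The point set `V^ε = {v : θ₀(v) = ε}` as a subtype. -/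
abbrev Veps (m : ℕ) (ε : ZMod 2) := {v : Vm m // theta0 m v = ε}

/-- The characteristic vector of a finite set. -/
def chi {α : Type*} [DecidableEq α] (S : Finset α) : α → ZMod 2 :=
  fun x => if x ∈ S then 1 else 0

/-- The code `C^ε`: the `𝔽₂`-span of the characteristic vectors of
4-element subsets of `V^ε` summing to zero. -/
def Ceps (m : ℕ) (ε : ZMod 2) : Submodule (ZMod 2) (Veps m ε → ZMod 2) :=
  Submodule.span (ZMod 2)
    {w | ∃ S : Finset (Veps m ε), S.card = 4 ∧ (∑ x ∈ S, (x : Vm m)) = 0 ∧ w = chi S}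

/-- The code `C^a`: the `𝔽₂`-span of the characteristic vectors of
4-element subsets of `V` summing to zero whose `θ₀`-values sum to zero. -/
def Ca (m : ℕ) : Submodule (ZMod 2) (Vm m → ZMod 2) :=
  Submodule.span (ZMod 2)
    {w | ∃ T : Finset (Vm m), T.card = 4 ∧ (∑ x ∈ T, x) = 0 ∧
         (∑ x ∈ T, theta0 m x) = 0 ∧ w = chi T}

section Helpers

set_option linter.unusedSectionVars false

variable {α : Type*} [Fintype α] [DecidableEq α]

/-- The linear functional `w ↦ ∑ x, g x * w x`. -/
def Lf (g : α → ZMod 2) : (α → ZMod 2) →ₗ[ZMod 2] ZMod 2 where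
  toFun w := ∑ x, g x * w x
  map_add' u v := by simp [mul_add, Finset.sum_add_distrib]
  map_smul' c w := by
    simp [Finset.mul_sum, Pi.smul_apply, smul_eq_mul, mul_left_comm]

lemma Lf_chi (g : α → ZMod 2) (S : Finset α) : Lf g (chi S) = ∑ x ∈ S, g x := by
  simp [Lf, chi, mul_ite, Finset.sum_ite_mem]

lemma span_vanish {gens : Set (α → ZMod 2)} {g : α → ZMod 2}
    (h : ∀ w ∈ gens, Lf g w = 0) {w : α → ZMod 2}
    (hw : w ∈ Submodule.span (ZMod 2) gens) : Lf g w = 0 := by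
  have : Submodule.span (ZMod 2) gens ≤ LinearMap.ker (Lf g) :=
    Submodule.span_le.2 fun x hx => LinearMap.mem_ker.2 (h x hx)
  exact LinearMap.mem_ker.1 (this hw)

lemma even_norm {w : α → ZMod 2} (h : Lf 1 w = 0) : Even (hammingNorm w) := by
  have h2 : ∀ a : ZMod 2, a = if a ≠ 0 then 1 else 0 := by decide
  have : ((hammingNorm w : ℕ) : ZMod 2) = ∑ x, w x := by
    rw [hammingNorm]
    rw [Finset.card_filter]
    push_cast
    refine Finset.sum_congr rfl fun x _ => ?_
    rw [h2 (w x)]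
    split <;> simp
  have h0 : ((hammingNorm w : ℕ) : ZMod 2) = 0 := by
    rw [this]; simpa [Lf] using h
  rw [even_iff_two_dvd]
  exact (ZMod.natCast_eq_zero_iff _ 2).1 h0

lemma norm_two {w : α → ZMod 2} (h : hammingNorm w = 2) :
    ∃ u v : α, u ≠ v ∧ w = chi {u, v} := by
  rw [hammingNorm] at h
  obtain ⟨u, v, huv, hS⟩ := Finset.card_eq_two.1 h
  refine ⟨u, v, huv, funext fun x => ?_⟩
  have hmem : x ∈ ({u, v} : Finset α) ↔ w x ≠ 0 := by
    rw [← hS]; simp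
  have h2 : ∀ a : ZMod 2, a ≠ 0 → a = 1 := by decide
  by_cases hx : w x ≠ 0
  · rw [chi, if_pos (hmem.2 hx), h2 _ hx]
  · push_neg at hx
    rw [chi, if_neg (fun hh => (hmem.1 hh) (by simpa using hx)), hx]

lemma sum_one_card_four {S : Finset α} (hc : S.card = 4) :
    ∑ x ∈ S, (1 : α → ZMod 2) x = 0 := by
  simp only [Pi.one_apply, Finset.sum_const, hc]
  decide

lemma neq_add_one {a b : ZMod 2} (h : a ≠ b) : a + b = 1 := by revert a b; decide

end Helpers

theorem stmt_11 (m : ℕ) (hm : 3 ≤ m) (ε : ZMod 2) :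
    (∀ w ∈ Ceps m ε, Even (hammingNorm w)) ∧
    (∀ w ∈ Ceps m ε, w ≠ 0 → 4 ≤ hammingNorm w) ∧
    (∀ S : Finset (Veps m ε), S.card = 4 →
        (chi S ∈ Ceps m ε ↔ (∑ x ∈ S, (x : Vm m)) = 0)) ∧
    (∀ w ∈ Ca m, Even (hammingNorm w)) ∧
    (∀ w ∈ Ca m, w ≠ 0 → 4 ≤ hammingNorm w) ∧
    (∀ T : Finset (Vm m), T.card = 4 →
        (chi T ∈ Ca m ↔ (∑ x ∈ T, x) = 0 ∧ (∑ x ∈ T, theta0 m x) = 0)) := by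
  classical
  -- generic vanishing principles
  have keyE : ∀ g : Veps m ε → ZMod 2,
      (∀ S : Finset (Veps m ε), S.card = 4 → (∑ x ∈ S, (x : Vm m)) = 0 →
        ∑ x ∈ S, g x = 0) →
      ∀ w ∈ Ceps m ε, Lf g w = 0 := by
    intro g hg w hw
    refine span_vanish ?_ hw
    rintro w' ⟨S, hc, hs, rfl⟩
    rw [Lf_chi]; exact hg S hc hs
  have keyA : ∀ g : Vm m → ZMod 2,
      (∀ T : Finset (Vm m), T.card = 4 → (∑ x ∈ T, x) = 0 →
        (∑ x ∈ T, theta0 m x) = 0 → ∑ x ∈ T, g x = 0) →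
      ∀ w ∈ Ca m, Lf g w = 0 := by
    intro g hg w hw
    refine span_vanish ?_ hw
    rintro w' ⟨T, hc, hs, ht, rfl⟩
    rw [Lf_chi]; exact hg T hc hs ht
  -- coordinate functionals
  have coordE : ∀ w ∈ Ceps m ε, ∀ i, Lf (fun x : Veps m ε => (x : Vm m) i) w = 0 := by
    intro w hw i
    refine keyE _ (fun S hc hs => ?_) w hw
    calc ∑ x ∈ S, (x : Vm m) i = (∑ x ∈ S, (x : Vm m)) i := by
          rw [Finset.sum_apply]
      _ = 0 := by rw [hs]; rfl
  have coordA : ∀ w ∈ Ca m, ∀ i, Lf (fun x : Vm m => x i) w = 0 := by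
    intro w hw i
    refine keyA _ (fun T hc hs _ => ?_) w hw
    calc ∑ x ∈ T, x i = (∑ x ∈ T, x) i := by rw [Finset.sum_apply]
      _ = 0 := by rw [hs]; rfl
  have thetaA : ∀ w ∈ Ca m, Lf (theta0 m) w = 0 :=
    fun w hw => keyA _ (fun T _ _ ht => ht) w hw
  -- evenness
  have evenE : ∀ w ∈ Ceps m ε, Even (hammingNorm w) := by
    intro w hw
    exact even_norm (keyE 1 (fun S hc _ => sum_one_card_four hc) w hw)
  have evenA : ∀ w ∈ Ca m, Even (hammingNorm w) := by
    intro w hw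
    exact even_norm (keyA 1 (fun T hc _ _ => sum_one_card_four hc) w hw)
  -- minimum distance
  have minE : ∀ w ∈ Ceps m ε, w ≠ 0 → 4 ≤ hammingNorm w := by
    intro w hw hne
    by_contra hlt
    push_neg at hlt
    obtain ⟨k, hk⟩ := evenE w hw
    have h02 : hammingNorm w = 0 ∨ hammingNorm w = 2 := by omega
    rcases h02 with h0 | h2
    · exact hne (hammingNorm_eq_zero.1 h0)
    · obtain ⟨u, v, huv, rfl⟩ := norm_two h2
      have hval : (u : Vm m) ≠ (v : Vm m) := fun h => huv (Subtype.ext h)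
      obtain ⟨i, hi⟩ := Function.ne_iff.1 hval
      have := coordE _ hw i
      rw [Lf_chi, Finset.sum_pair huv] at this
      rw [neq_add_one hi] at this
      exact one_ne_zero this
  have minA : ∀ w ∈ Ca m, w ≠ 0 → 4 ≤ hammingNorm w := by
    intro w hw hne
    by_contra hlt
    push_neg at hlt
    obtain ⟨k, hk⟩ := evenA w hw
    have h02 : hammingNorm w = 0 ∨ hammingNorm w = 2 := by omega
    rcases h02 with h0 | h2
    · exact hne (hammingNorm_eq_zero.1 h0)
    · obtain ⟨u, v, huv, rfl⟩ := norm_two h2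
      obtain ⟨i, hi⟩ := Function.ne_iff.1 huv
      have := coordA _ hw i
      rw [Lf_chi, Finset.sum_pair huv] at this
      rw [neq_add_one hi] at this
      exact one_ne_zero this
  -- membership characterizations
  have iffE : ∀ S : Finset (Veps m ε), S.card = 4 →
      (chi S ∈ Ceps m ε ↔ (∑ x ∈ S, (x : Vm m)) = 0) := by
    intro S hc
    constructor
    · intro h
      funext i
      have := coordE _ h i
      rw [Lf_chi] at this
      rw [Finset.sum_apply]
      exact this
    · intro hs
      exact Submodule.subset_span ⟨S, hc, hs, rfl⟩
  have iffA : ∀ T : Finset (Vm m), T.card = 4 →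
      (chi T ∈ Ca m ↔ (∑ x ∈ T, x) = 0 ∧ (∑ x ∈ T, theta0 m x) = 0) := by
    intro T hc
    constructor
    · intro h
      constructor
      · funext i
        have := coordA _ h i
        rw [Lf_chi] at this
        rw [Finset.sum_apply]
        exact this
      · have := thetaA _ h
        rwa [Lf_chi] at this
    · rintro ⟨hs, ht⟩
      exact Submodule.subset_span ⟨T, hc, hs, ht, rfl⟩
  exact ⟨evenE, minE, iffE, evenA, minA, iffA⟩
end
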